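/- There exists an absolute constant c > 0 such that for every q ∈ ℂ with 0 < |q| ≤ e^{−π√3} and every δ ∈ ℂ with 0 < |δ| ≤ 1/2, one has | log|g₀(1 + δ)| − log|δ| − 2·∑_{n=1}^∞ log|1 − qⁿ| | ≤ c·|δ|², where g₀(t) = (t − 1)·∏_{n=1}^∞ (1 − qⁿ t)(1 − qⁿ t^{−1}). -/

import Mathlib

open Real

/-!
Put `x = qⁿ` and `t = 1 + δ`. Each factor of the product satisfies the exact identity
`(1 - x t)(1 - x t⁻¹) = (1 - x)² - x (t - 1)² / t`, so it is `(1 - x)²` times `1 + O(|x| |δ|²)`.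
Taking `log ‖·‖` turns the product into a sum, and the corrections add up to
`O(|δ|² ∑ |q|ⁿ) = O(|δ|²)` because `|q| ≤ e^{-π√3} ≤ 1/4`.
-/

lemma exp_neg_pi_mul_sqrt_three_le : exp (-(π * √3)) ≤ 1 / 4 := by
  have h3 : 3 ≤ π * √3 := by
    have : 1 ≤ √3 := Real.one_le_sqrt.mpr (by norm_num)
    nlinarith [pi_gt_three]
  calc exp (-(π * √3)) ≤ exp (-3) := exp_le_exp.mpr (by linarith)
    _ = (exp 3)⁻¹ := exp_neg 3
    _ ≤ 1 / 4 := by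
      rw [one_div]
      exact inv_anti₀ (by norm_num) (by linarith [add_one_le_exp 3])

lemma abs_log_norm_one_add_le {z : ℂ} (hz : ‖z‖ ≤ 1 / 2) :
    |log ‖1 + z‖| ≤ 3 / 2 * ‖z‖ := by
  rw [← Complex.log_re]
  exact (Complex.abs_re_le_norm _).trans (Complex.norm_log_one_add_half_le_self hz)

lemma hasSum_pow_succ_of_lt_one {r : ℝ} (h₀ : 0 ≤ r) (h₁ : r < 1) :
    HasSum (fun n : ℕ ↦ r ^ (n + 1)) (r / (1 - r)) := by
  simpa [pow_succ', div_eq_mul_inv] using (hasSum_geometric_of_lt_one h₀ h₁).mul_left r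

section InfiniteProduct

variable {ι R : Type*} [NormedCommRing R] [NormOneClass R] {a : ι → R}

lemma summable_log_norm_of_summable_norm_sub_one (ha : Summable fun i ↦ ‖a i - 1‖) :
    Summable fun i ↦ log ‖a i‖ := by
  simpa using ha.summable_log_norm_one_add

lemma log_norm_tprod_of_summable_norm_sub_one [CompleteSpace R] [NormMulClass R]
    (ha0 : ∀ i, a i ≠ 0) (ha : Summable fun i ↦ ‖a i - 1‖) :
    log ‖∏' i, a i‖ = ∑' i, log ‖a i‖ := by
  have hmul : Multipliable a := by simpa using multipliable_one_add_of_summable ha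
  rw [hmul.norm_tprod, ← rexp_tsum_eq_tprod (fun i ↦ norm_pos_iff.mpr (ha0 i))
    (summable_log_norm_of_summable_norm_sub_one ha), log_exp]

lemma tprod_ne_zero_of_summable_norm_sub_one [CompleteSpace R] [NormMulClass R]
    (ha0 : ∀ i, a i ≠ 0) (ha : Summable fun i ↦ ‖a i - 1‖) : ∏' i, a i ≠ 0 := by
  simpa using tprod_one_add_ne_zero_of_summable (f := fun i ↦ a i - 1) (by simpa using ha0) ha

end InfiniteProduct

/-- The factor of `g₀(t)` indexed by `x = qⁿ`. -/
noncomputable def thetaFactor (x t : ℂ) : ℂ := (1 - x * t) * (1 - x * t⁻¹)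

noncomputable def thetaCorrection (x t : ℂ) : ℂ := -(x * (t - 1) ^ 2 / (t * (1 - x) ^ 2))

section ThetaFactor

variable {x t : ℂ}

lemma half_le_norm_of_norm_sub_one_le (ht : ‖t - 1‖ ≤ 1 / 2) : 1 / 2 ≤ ‖t‖ := by
  have := norm_sub_norm_le 1 t
  rw [norm_one, norm_sub_rev] at this
  linarith

lemma three_quarters_le_norm_one_sub (hx : ‖x‖ ≤ 1 / 4) : 3 / 4 ≤ ‖1 - x‖ := by
  have := norm_sub_norm_le 1 x
  rw [norm_one] at this
  linarith

lemma thetaFactor_eq_mul (ht : t ≠ 0) (hx : 1 - x ≠ 0) :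
    thetaFactor x t = (1 - x) ^ 2 * (1 + thetaCorrection x t) := by
  unfold thetaFactor thetaCorrection
  field_simp
  ring

lemma thetaFactor_sub_one_eq (ht : t ≠ 0) : thetaFactor x t - 1 = x * (x - t - t⁻¹) := by
  unfold thetaFactor
  field_simp
  ring

variable (hx : ‖x‖ ≤ 1 / 4) (ht : ‖t - 1‖ ≤ 1 / 2)
include hx ht

lemma ne_zero_and_one_sub_ne_zero : t ≠ 0 ∧ 1 - x ≠ 0 :=
  ⟨norm_pos_iff.mp (by linarith [half_le_norm_of_norm_sub_one_le ht]),
    norm_pos_iff.mp (by linarith [three_quarters_le_norm_one_sub hx])⟩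

lemma norm_thetaCorrection_le :
    ‖thetaCorrection x t‖ ≤ 4 * ‖x‖ * ‖t - 1‖ ^ 2 := by
  have hden : 1 / 4 ≤ ‖t‖ * ‖1 - x‖ ^ 2 := by
    nlinarith [half_le_norm_of_norm_sub_one_le ht, three_quarters_le_norm_one_sub hx]
  rw [thetaCorrection, norm_neg, norm_div, norm_mul, norm_mul, norm_pow, norm_pow,
    div_le_iff₀ (by linarith)]
  have := mul_le_mul_of_nonneg_left hden (by positivity : 0 ≤ 4 * ‖x‖ * ‖t - 1‖ ^ 2)
  linarith

lemma norm_thetaCorrection_le_quarter :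
    ‖thetaCorrection x t‖ ≤ 1 / 4 := by
  have := norm_thetaCorrection_le hx ht
  have : ‖t - 1‖ ^ 2 ≤ 1 / 4 := by nlinarith [norm_nonneg (t - 1)]
  nlinarith [norm_nonneg x]

lemma three_quarters_le_norm_one_add_thetaCorrection :
    3 / 4 ≤ ‖1 + thetaCorrection x t‖ := by
  have := norm_sub_norm_le 1 (-thetaCorrection x t)
  rw [norm_one, norm_neg, sub_neg_eq_add] at this
  linarith [norm_thetaCorrection_le_quarter hx ht]

lemma thetaFactor_ne_zero : thetaFactor x t ≠ 0 := by
  obtain ⟨ht0, hx1⟩ := ne_zero_and_one_sub_ne_zero hx ht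
  rw [← norm_pos_iff, thetaFactor_eq_mul ht0 hx1, norm_mul, norm_pow]
  have := three_quarters_le_norm_one_sub hx
  have := three_quarters_le_norm_one_add_thetaCorrection hx ht
  positivity

lemma abs_log_norm_thetaFactor_sub_le :
    |log ‖thetaFactor x t‖ - 2 * log ‖1 - x‖| ≤ 6 * ‖x‖ * ‖t - 1‖ ^ 2 := by
  obtain ⟨ht0, hx1⟩ := ne_zero_and_one_sub_ne_zero hx ht
  have h1 := three_quarters_le_norm_one_sub hx
  have h2 := three_quarters_le_norm_one_add_thetaCorrection hx ht
  rw [thetaFactor_eq_mul ht0 hx1, norm_mul, norm_pow, log_mul (by positivity) (by positivity),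
    log_pow, Nat.cast_ofNat, add_sub_cancel_left]
  calc _ ≤ 3 / 2 * ‖thetaCorrection x t‖ :=
        abs_log_norm_one_add_le (by linarith [norm_thetaCorrection_le_quarter hx ht])
    _ ≤ 6 * ‖x‖ * ‖t - 1‖ ^ 2 := by linarith [norm_thetaCorrection_le hx ht]

lemma norm_thetaFactor_sub_one_le : ‖thetaFactor x t - 1‖ ≤ 4 * ‖x‖ := by
  have hsum : ‖x - t - t⁻¹‖ ≤ 4 := by
    have : ‖t‖ ≤ 3 / 2 := by linarith [norm_le_norm_sub_add t 1, norm_one (α := ℂ)]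
    have : ‖t⁻¹‖ ≤ 2 := by
      rw [norm_inv]
      exact inv_le_of_inv_le₀ (by norm_num) (by linarith [half_le_norm_of_norm_sub_one_le ht])
    linarith [norm_sub_le (x - t) t⁻¹, norm_sub_le x t]
  rw [thetaFactor_sub_one_eq (ne_zero_and_one_sub_ne_zero hx ht).1, norm_mul]
  exact (mul_le_mul_of_nonneg_left hsum (norm_nonneg x)).trans_eq (mul_comm _ _)

end ThetaFactor

section Product

variable {q t : ℂ} (hq : ‖q‖ ≤ 1 / 4) (ht : ‖t - 1‖ ≤ 1 / 2)
include hq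

lemma norm_pow_succ_le_quarter (n : ℕ) : ‖q ^ (n + 1)‖ ≤ 1 / 4 := by
  rw [norm_pow]
  exact (pow_le_of_le_one (norm_nonneg q) (by linarith) n.succ_ne_zero).trans hq

lemma hasSum_norm_pow_succ : HasSum (fun n : ℕ ↦ ‖q‖ ^ (n + 1)) (‖q‖ / (1 - ‖q‖)) :=
  hasSum_pow_succ_of_lt_one (norm_nonneg q) (by linarith)

include ht

lemma summable_norm_thetaFactor_sub_one :
    Summable fun n : ℕ ↦ ‖thetaFactor (q ^ (n + 1)) t - 1‖ :=
  ((hasSum_norm_pow_succ hq).summable.mul_left 4).of_nonneg_of_le (fun _ ↦ norm_nonneg _)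
    fun n ↦ (norm_thetaFactor_sub_one_le (norm_pow_succ_le_quarter hq n) ht).trans_eq
      (by rw [norm_pow])

lemma tprod_thetaFactor_ne_zero : ∏' n : ℕ, thetaFactor (q ^ (n + 1)) t ≠ 0 :=
  tprod_ne_zero_of_summable_norm_sub_one
    (fun n ↦ thetaFactor_ne_zero (norm_pow_succ_le_quarter hq n) ht)
    (summable_norm_thetaFactor_sub_one hq ht)

lemma abs_log_norm_tprod_thetaFactor_sub_le :
    |log ‖∏' n : ℕ, thetaFactor (q ^ (n + 1)) t‖ - 2 * ∑' n : ℕ, log ‖1 - q ^ (n + 1)‖| ≤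
      2 * ‖t - 1‖ ^ 2 := by
  have hx := norm_pow_succ_le_quarter hq
  have hfac := summable_norm_thetaFactor_sub_one hq ht
  have hone : Summable fun n : ℕ ↦ ‖(1 - q ^ (n + 1)) - 1‖ := by
    simpa using (hasSum_norm_pow_succ hq).summable
  rw [log_norm_tprod_of_summable_norm_sub_one (fun n ↦ thetaFactor_ne_zero (hx n) ht) hfac,
    ← tsum_mul_left, ← (summable_log_norm_of_summable_norm_sub_one hfac).tsum_sub
      ((summable_log_norm_of_summable_norm_sub_one hone).mul_left 2), ← Real.norm_eq_abs]
  refine (tsum_of_norm_bounded ((hasSum_norm_pow_succ hq).mul_left (6 * ‖t - 1‖ ^ 2))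
    fun n ↦ ?_).trans ?_
  · rw [Real.norm_eq_abs]
    exact (abs_log_norm_thetaFactor_sub_le (hx n) ht).trans_eq (by rw [norm_pow]; ring)
  · have : ‖q‖ / (1 - ‖q‖) ≤ 1 / 3 := by
      rw [div_le_iff₀ (by linarith)]
      linarith
    nlinarith [sq_nonneg ‖t - 1‖]

end Product

/-- There is an absolute constant `c > 0` such that for every `q ∈ ℂ` with
`0 < |q| ≤ e^{−π√3}` and every `δ ∈ ℂ` with `0 < |δ| ≤ 1/2`, the function
`g₀(t) = (t − 1)·∏_{n≥1} (1 − qⁿt)(1 − qⁿt⁻¹)` satisfies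
`| log|g₀(1+δ)| − log|δ| − 2·∑_{n≥1} log|1 − qⁿ| | ≤ c·|δ|²`. -/
theorem log_g0_expansion_near_one :
    ∃ c : ℝ, 0 < c ∧
      ∀ q δ : ℂ, 0 < ‖q‖ →
        ‖q‖ ≤ Real.exp (-(π * Real.sqrt 3)) →
        0 < ‖δ‖ → ‖δ‖ ≤ 1 / 2 →
          |Real.log (‖
              (((1 + δ) - 1) * ∏' n : ℕ,
                (1 - q ^ (n + 1) * (1 + δ)) * (1 - q ^ (n + 1) * (1 + δ)⁻¹))‖) -
            Real.log (‖δ‖) -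
            2 * ∑' n : ℕ, Real.log (‖1 - q ^ (n + 1)‖)| ≤
          c * ‖δ‖ ^ 2 := by
  refine ⟨2, two_pos, fun q δ _ hq hδ0 hδ ↦ ?_⟩
  have hq' := hq.trans exp_neg_pi_mul_sqrt_three_le
  have ht : ‖(1 + δ) - 1‖ ≤ 1 / 2 := by rwa [add_sub_cancel_left]
  have hlog := abs_log_norm_tprod_thetaFactor_sub_le hq' ht
  have hP := tprod_thetaFactor_ne_zero hq' ht
  unfold thetaFactor at hlog hP
  rw [add_sub_cancel_left] at hlog ⊢
  rw [norm_mul, log_mul hδ0.ne' (norm_ne_zero_iff.mpr hP), add_sub_cancel_left]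
  exact hlog
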